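/- arXiv:2603.28693 — 4 statements merged into one kernel-verified Lean document; each statement's English description precedes it below -/
import Mathlib

section
/- Let (X, d) be a metric space and h : X → (0, ∞) a 1-Lipschitz function, i.e. |h(x) − h(y)| ≤ d(x, y) for all x, y. Then ρ(x, y) := min{d(x, y), h(x) + h(y)} defines a metric on X. -/
/-- ρ(x,y) = min(d(x,y), h(x)+h(y)) is a metric when h is a
positive 1-Lipschitz function. -/
theorem stmt_7 {X : Type*} [MetricSpace X] (h : X → ℝ) (hpos : ∀ x, 0 < h x)
    (hlip : ∀ x y, |h x - h y| ≤ dist x y) :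
    (∀ x y, min (dist x y) (h x + h y) = min (dist y x) (h y + h x)) ∧
    (∀ x y, min (dist x y) (h x + h y) = 0 ↔ x = y) ∧
    (∀ x y z, min (dist x z) (h x + h z) ≤
      min (dist x y) (h x + h y) + min (dist y z) (h y + h z)) := by
  refine ⟨fun x y => by rw [dist_comm, add_comm], fun x y => ?_, fun x y z => ?_⟩
  · constructor
    · intro h0
      have hsum : 0 < h x + h y := by linarith [hpos x, hpos y]
      have : dist x y = 0 ∨ h x + h y = 0 := by
        rcases le_total (dist x y) (h x + h y) with hle | hle
        · left; rw [min_eq_left hle] at h0; exact h0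
        · right; rw [min_eq_right hle] at h0; exact h0
      rcases this with hd | hs
      · exact dist_eq_zero.mp hd
      · linarith
    · rintro rfl
      simp [dist_self, min_eq_left (by linarith [hpos x] : (0:ℝ) ≤ h x + h x)]
  · rcases min_cases (dist x y) (h x + h y) with ⟨e1, _⟩ | ⟨e1, _⟩ <;>
    rcases min_cases (dist y z) (h y + h z) with ⟨e2, _⟩ | ⟨e2, _⟩ <;>
    rw [e1, e2]
    · exact le_trans (min_le_left _ _) (dist_triangle x y z)
    · refine le_trans (min_le_right _ _) ?_
      have := abs_le.mp (hlip x y)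
      linarith [this.2]
    · refine le_trans (min_le_right _ _) ?_
      have := abs_le.mp (hlip z y)
      linarith [this.2, dist_comm y z]
    · exact le_trans (min_le_right _ _) (by linarith [hpos y])
end

section
/- Let (aᵢ)_{i∈I} be a countable family of nonnegative reals with finite counting function, and let δ := inf{s : Σᵢ e^{−saᵢ} < ∞} < ∞. Suppose h : ℝ → (0, ∞) is a non-decreasing function with the property that for every ε > 0 there exists t₀ > 0 such that h(st) ≤ s^ε h(t) for all t > t₀ and s > 1. Then for every s > δ, the series Σᵢ h(aᵢ) e^{−s aᵢ} converges. -/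
/-! Applying the slow-variation bound once, with ε = 1, shows that `h` grows at most linearly.
For `δ < r < s` the weight `1 + t` is dominated by a multiple of `exp ((s - r) t)`, so the series
`Σ h(aᵢ) e^{-s aᵢ}` is dominated by a multiple of `Σ e^{-r aᵢ}`, which converges since `r > δ`. -/

open Real

theorem Summable.exp_neg_mul_of_le {I : Type*} {a : I → ℝ} (ha : ∀ i, 0 ≤ a i) {u r : ℝ}
    (hu : Summable fun i => exp (-u * a i)) (hur : u ≤ r) :
    Summable fun i => exp (-r * a i) :=
  hu.of_nonneg_of_le (fun _ => (exp_pos _).le)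
    fun i => exp_le_exp.mpr (by nlinarith [ha i])

theorem summable_exp_neg_mul_of_isGLB_lt {I : Type*} {a : I → ℝ} (ha : ∀ i, 0 ≤ a i) {δ r : ℝ}
    (hδ : IsGLB {s : ℝ | Summable fun i => exp (-s * a i)} δ) (hr : δ < r) :
    Summable fun i => exp (-r * a i) := by
  obtain ⟨u, hu, -, hur⟩ := hδ.exists_between hr
  exact hu.exp_neg_mul_of_le ha hur.le

theorem one_add_le_mul_exp {c t : ℝ} (hc : 0 < c) (ht : 0 ≤ t) :
    1 + t ≤ (1 + 1 / c) * exp (c * t) := by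
  have hexp : 1 + c * t ≤ exp (c * t) := by linarith [add_one_le_exp (c * t)]
  calc 1 + t ≤ (1 + 1 / c) * (1 + c * t) := by
        field_simp
        nlinarith [mul_nonneg hc.le ht, mul_nonneg (mul_nonneg hc.le hc.le) ht]
    _ ≤ (1 + 1 / c) * exp (c * t) := by gcongr

theorem summable_one_add_mul_exp_neg_mul {I : Type*} {a : I → ℝ} (ha : ∀ i, 0 ≤ a i) {r s : ℝ}
    (hr : Summable fun i => exp (-r * a i)) (hrs : r < s) :
    Summable fun i => (1 + a i) * exp (-s * a i) := by
  refine (hr.mul_left (1 + 1 / (s - r))).of_nonneg_of_le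
    (fun i => mul_nonneg (by linarith [ha i]) (exp_pos _).le) fun i => ?_
  calc (1 + a i) * exp (-s * a i)
      ≤ (1 + 1 / (s - r)) * exp ((s - r) * a i) * exp (-s * a i) := by
        gcongr
        exact one_add_le_mul_exp (sub_pos.mpr hrs) (ha i)
    _ = (1 + 1 / (s - r)) * exp (-r * a i) := by
        rw [mul_assoc, ← exp_add]
        ring_nf

theorem Monotone.exists_le_mul_one_add {h : ℝ → ℝ} (hmono : Monotone h) (hnonneg : ∀ t, 0 ≤ h t)
    {t₀ : ℝ} (ht₀ : 0 ≤ t₀) (hslow : ∀ t > t₀, ∀ s > (1 : ℝ), h (s * t) ≤ s * h t) :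
    ∃ C, ∀ t, 0 ≤ t → h t ≤ C * (1 + t) := by
  set t₁ := t₀ + 1
  have ht₁ : 0 < t₁ := by positivity
  refine ⟨h t₁, fun t ht => ?_⟩
  rcases le_or_gt t t₁ with hle | hgt
  · calc h t ≤ h t₁ := hmono hle
      _ ≤ h t₁ * (1 + t) := le_mul_of_one_le_right (hnonneg _) (by linarith)
  · have hratio : 1 < t / t₁ := (one_lt_div ht₁).mpr hgt
    calc h t = h (t / t₁ * t₁) := by rw [div_mul_cancel₀ _ ht₁.ne']
      _ ≤ t / t₁ * h t₁ := hslow t₁ (by linarith) _ hratio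
      _ ≤ t * h t₁ := by
        gcongr
        · exact hnonneg _
        · exact div_le_self ht (by linarith)
      _ ≤ h t₁ * (1 + t) := by nlinarith [hnonneg t₁]

theorem stmt_9_general {I : Type*} (a : I → ℝ) (ha : ∀ i, 0 ≤ a i)
    (δ : ℝ) (hδ : IsGLB {s : ℝ | Summable fun i => Real.exp (-s * a i)} δ)
    (h : ℝ → ℝ) (hpos : ∀ t, 0 < h t) (hmono : Monotone h)
    (hslow : ∀ ε > (0 : ℝ), ∃ t₀ > (0 : ℝ), ∀ t > t₀, ∀ s > (1 : ℝ),
      h (s * t) ≤ s ^ ε * h t) :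
    ∀ s > δ, Summable fun i => h (a i) * Real.exp (-s * a i) := by
  intro s hs
  obtain ⟨r, hδr, hrs⟩ := exists_between hs
  obtain ⟨t₀, ht₀, hslow₁⟩ := hslow 1 one_pos
  obtain ⟨C, hC⟩ := hmono.exists_le_mul_one_add (fun t => (hpos t).le) ht₀.le
    (by simpa only [rpow_one] using hslow₁)
  have hdom := (summable_one_add_mul_exp_neg_mul ha
    (summable_exp_neg_mul_of_isGLB_lt ha hδ hδr) hrs).mul_left C
  refine hdom.of_nonneg_of_le (fun i => mul_nonneg (hpos _).le (exp_pos _).le) fun i => ?_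
  rw [← mul_assoc]
  exact mul_le_mul_of_nonneg_right (hC _ (ha i)) (exp_pos _).le

/-- Patterson's construction: if h is non-decreasing, positive, and
slowly varying in Patterson's sense, then the modified Poincaré series
Σᵢ h(aᵢ) e^{−s aᵢ} converges for every s above the abscissa of convergence δ of
Σᵢ e^{−s aᵢ}. -/
theorem stmt_9 {I : Type*} [Countable I] (a : I → ℝ) (ha : ∀ i, 0 ≤ a i)
    (hfin : ∀ T : ℝ, {i : I | a i ≤ T}.Finite)
    (δ : ℝ) (hδ : IsGLB {s : ℝ | Summable fun i => Real.exp (-s * a i)} δ)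
    (h : ℝ → ℝ) (hpos : ∀ t, 0 < h t) (hmono : Monotone h)
    (hslow : ∀ ε > (0 : ℝ), ∃ t₀ > (0 : ℝ), ∀ t > t₀, ∀ s > (1 : ℝ),
      h (s * t) ≤ s ^ ε * h t) :
    ∀ s > δ, Summable fun i => h (a i) * Real.exp (-s * a i) :=
  stmt_9_general a ha δ hδ h hpos hmono hslow
end

section
/- Let V be a finite-dimensional real inner product space with an orthogonal splitting V = V⁺ ⊕ V⁻, dim V⁺ = 1, and fix λ ∈ ℝ and α > 0. For each t > 0 let A_t be a linear map on V preserving the splitting with A_t v = e^{λ t} v for v ∈ V⁺ and ‖A_t|_{V⁻}‖ ≤ e^{(λ − α) t}. Let P, P' ∈ End(V) with ‖P‖ ≤ 1 and im P ⊆ V⁻. If ‖A_t ∘ P‖ = ‖A_t ∘ P'‖ for all t > 0, then im P' ⊆ V⁻. -/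
/-!
Split `x = P' v` into its components along `V⁺` and `V⁻`. Since `A_t` scales the `V⁺`-component by
`e^{λt}` and keeps `V⁻` invariant, the orthogonal projection of `A_t x` onto `V⁺` has norm
`e^{λt} ‖x⁺‖`, whence `e^{λt} ‖x⁺‖ ≤ ‖A_t ∘ P'‖ ‖v‖ = ‖A_t ∘ P‖ ‖v‖ ≤ e^{(λ-α)t} ‖v‖`.
Thus `‖x⁺‖ ≤ e^{-αt} ‖v‖` for every `t > 0`, and letting `t → ∞` gives `x⁺ = 0`.
-/

open Real Filter

theorem ContinuousLinearMap.opNorm_comp_le_of_range_le {𝕜 E F G : Type*}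
    [NontriviallyNormedField 𝕜] [SeminormedAddCommGroup E] [NormedSpace 𝕜 E]
    [SeminormedAddCommGroup F] [NormedSpace 𝕜 F] [SeminormedAddCommGroup G] [NormedSpace 𝕜 G]
    (A : E →L[𝕜] F) (W : Submodule 𝕜 E) {c : ℝ} (hc : 0 ≤ c)
    (hA : ∀ w ∈ W, ‖A w‖ ≤ c * ‖w‖) (P : G →L[𝕜] E)
    (hP : LinearMap.range (P : G →ₗ[𝕜] E) ≤ W) :
    ‖A.comp P‖ ≤ c * ‖P‖ := by
  refine (A.comp P).opNorm_le_bound (by positivity) fun y ↦ ?_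
  calc ‖A (P y)‖ ≤ c * ‖P y‖ := hA _ (hP ⟨y, rfl⟩)
    _ ≤ c * (‖P‖ * ‖y‖) := by gcongr; exact P.le_opNorm y
    _ = c * ‖P‖ * ‖y‖ := (mul_assoc _ _ _).symm

namespace Submodule

variable {𝕜 E : Type*} [RCLike 𝕜] [NormedAddCommGroup E] [InnerProductSpace 𝕜 E]
  (K : Submodule 𝕜 E) [K.HasOrthogonalProjection] {A : E →L[𝕜] E} {s : 𝕜}

theorem starProjection_apply_of_eq_smul (hK : ∀ v ∈ K, A v = s • v)
    (hKperp : ∀ v ∈ Kᗮ, A v ∈ Kᗮ) (x : E) :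
    K.starProjection (A x) = s • K.starProjection x := by
  refine eq_starProjection_of_mem_orthogonal' (K.smul_mem s (K.starProjection_apply_mem x))
    (hKperp _ (K.sub_starProjection_mem_orthogonal x)) ?_
  rw [← hK _ (K.starProjection_apply_mem x), ← map_add, add_sub_cancel]

theorem norm_smul_starProjection_le_of_eq_smul (hK : ∀ v ∈ K, A v = s • v)
    (hKperp : ∀ v ∈ Kᗮ, A v ∈ Kᗮ) (x : E) :
    ‖s‖ * ‖K.starProjection x‖ ≤ ‖A x‖ := by
  rw [← norm_smul, ← K.starProjection_apply_of_eq_smul hK hKperp]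
  exact K.norm_starProjection_apply_le _

end Submodule

theorem nonpos_of_forall_le_exp_neg_mul {r C α : ℝ} (hα : 0 < α)
    (h : ∀ t > 0, r ≤ exp (-(α * t)) * C) : r ≤ 0 := by
  have hlim : Tendsto (fun t ↦ exp (-(α * t)) * C) atTop (nhds 0) := by
    simpa using (tendsto_exp_neg_atTop_nhds_zero.comp
      (tendsto_id.const_mul_atTop hα)).mul_const C
  exact ge_of_tendsto hlim ((eventually_gt_atTop 0).mono h)

theorem stmt_14_general {V : Type*} [NormedAddCommGroup V] [InnerProductSpace ℝ V]
    [FiniteDimensional ℝ V] (Vp : Submodule ℝ V)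
    (lam α : ℝ) (hα : 0 < α)
    (At : ℝ → (V →L[ℝ] V))
    (hAp : ∀ t > (0 : ℝ), ∀ v ∈ Vp, At t v = Real.exp (lam * t) • v)
    (hAm : ∀ t > (0 : ℝ), ∀ v ∈ Vpᗮ,
      At t v ∈ Vpᗮ ∧ ‖At t v‖ ≤ Real.exp ((lam - α) * t) * ‖v‖)
    (P P' : V →L[ℝ] V) (hP : ‖P‖ ≤ 1)
    (hPrange : LinearMap.range (P : V →ₗ[ℝ] V) ≤ Vpᗮ)
    (heq : ∀ t > (0 : ℝ), ‖(At t).comp P‖ = ‖(At t).comp P'‖) :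
    LinearMap.range (P' : V →ₗ[ℝ] V) ≤ Vpᗮ := by
  rintro _ ⟨v, rfl⟩
  rw [← Vp.starProjection_apply_eq_zero_iff, ← norm_le_zero_iff]
  refine nonpos_of_forall_le_exp_neg_mul (C := ‖v‖) hα fun t ht ↦ ?_
  have hlower : exp (lam * t) * ‖Vp.starProjection (P' v)‖ ≤ ‖At t (P' v)‖ := by
    simpa [abs_of_pos (exp_pos _)] using Vp.norm_smul_starProjection_le_of_eq_smul
      (hAp t ht) (fun w hw ↦ (hAm t ht w hw).1) (P' v)
  have hupper : ‖At t (P' v)‖ ≤ exp ((lam - α) * t) * ‖v‖ :=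
    calc ‖At t (P' v)‖ ≤ ‖(At t).comp P'‖ * ‖v‖ := ((At t).comp P').le_opNorm v
      _ = ‖(At t).comp P‖ * ‖v‖ := by rw [heq t ht]
      _ ≤ exp ((lam - α) * t) * ‖P‖ * ‖v‖ := by
        gcongr
        exact (At t).opNorm_comp_le_of_range_le Vpᗮ (exp_pos _).le
          (fun w hw ↦ (hAm t ht w hw).2) P hPrange
      _ ≤ exp ((lam - α) * t) * ‖v‖ := by
        gcongr
        exact mul_le_of_le_one_right (exp_pos _).le hP
  rw [show (lam - α) * t = lam * t + -(α * t) by ring, exp_add, mul_assoc] at hupper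
  exact le_of_mul_le_mul_left (hlower.trans hupper) (exp_pos _)

/-- growth-rate comparison: if A_t scales the one-dimensional V⁺ by
e^{λt} and contracts V⁻ = V⁺ᗮ by at most e^{(λ−α)t}, ‖P‖ ≤ 1 with im P ⊆ V⁻, and
‖A_t ∘ P‖ = ‖A_t ∘ P'‖ for all t > 0, then im P' ⊆ V⁻. -/
theorem stmt_14 {V : Type*} [NormedAddCommGroup V] [InnerProductSpace ℝ V]
    [FiniteDimensional ℝ V] (Vp : Submodule ℝ V) (hVp : Module.finrank ℝ Vp = 1)
    (lam α : ℝ) (hα : 0 < α)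
    (At : ℝ → (V →L[ℝ] V))
    (hAp : ∀ t > (0 : ℝ), ∀ v ∈ Vp, At t v = Real.exp (lam * t) • v)
    (hAm : ∀ t > (0 : ℝ), ∀ v ∈ Vpᗮ,
      At t v ∈ Vpᗮ ∧ ‖At t v‖ ≤ Real.exp ((lam - α) * t) * ‖v‖)
    (P P' : V →L[ℝ] V) (hP : ‖P‖ ≤ 1)
    (hPrange : LinearMap.range (P : V →ₗ[ℝ] V) ≤ Vpᗮ)
    (heq : ∀ t > (0 : ℝ), ‖(At t).comp P‖ = ‖(At t).comp P'‖) :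
    LinearMap.range (P' : V →ₗ[ℝ] V) ≤ Vpᗮ :=
  stmt_14_general Vp lam α hα At hAp hAm P P' hP hPrange heq
end

section
/- Let V be a finite-dimensional real inner product space, (gₙ) a sequence in GL(V), and T ∈ End(V) with gₙ/‖gₙ‖ → T. Suppose gₙ = kₙ aₙ ℓₙ where kₙ, ℓₙ are orthogonal maps with kₙ → k, ℓₙ → ℓ, and aₙ are positive self-adjoint with ordered eigenvalues, such that aₙ/‖aₙ‖ converges to the orthogonal projection onto a fixed one-dimensional subspace L (i.e. σ₂(aₙ)/σ₁(aₙ) → 0 and the top eigenspace of aₙ is L for all n). Then T has rank one, with image k(L) and kernel ℓ⁻¹(L^⊥). -/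
/-! Since `kₙ` and `ℓₙ` are isometries, `‖gₙ‖ = ‖aₙ‖`, so `‖gₙ‖⁻¹ • gₙ = kₙ (‖aₙ‖⁻¹ • aₙ) ℓₙ`
converges to `k0 ∘ P_L ∘ l0`, whose image and kernel are read off from those of the projection `P_L`. -/

open Filter Topology

namespace ContinuousLinearMap

variable {𝕜 E : Type*} [RCLike 𝕜] [NormedAddCommGroup E] [InnerProductSpace 𝕜 E]
  (L : Submodule 𝕜 E) [L.HasOrthogonalProjection] (k l : E ≃ₗᵢ[𝕜] E)

theorem ker_linearIsometryEquiv_mul_starProjection_mul :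
    LinearMap.ker ((k * L.starProjection * l : E →L[𝕜] E) : E →ₗ[𝕜] E) =
      Lᗮ.comap l.toLinearIsometry.toLinearMap := by
  change LinearMap.ker (k.toLinearEquiv.toLinearMap ∘ₗ
    ((L.starProjection : E →ₗ[𝕜] E) ∘ₗ l.toLinearIsometry.toLinearMap)) = _
  rw [LinearEquiv.ker_comp, LinearMap.ker_comp, Submodule.ker_starProjection]

theorem range_linearIsometryEquiv_mul_starProjection_mul :
    LinearMap.range ((k * L.starProjection * l : E →L[𝕜] E) : E →ₗ[𝕜] E) =
      L.map k.toLinearIsometry.toLinearMap := by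
  change LinearMap.range (k.toLinearIsometry.toLinearMap ∘ₗ
    ((L.starProjection : E →ₗ[𝕜] E) ∘ₗ l.toLinearEquiv.toLinearMap)) = _
  rw [LinearMap.range_comp, LinearMap.range_comp_of_range_eq_top _ l.toLinearEquiv.range,
    Submodule.range_starProjection]

end ContinuousLinearMap

theorem Filter.Tendsto.inv_norm_smul_linearIsometryEquiv_mul_mul {ι E : Type*}
    [NormedAddCommGroup E] [NormedSpace ℝ E] [Nontrivial E] {f : Filter ι}
    {a : ι → E →L[ℝ] E} {k l : ι → E ≃ₗᵢ[ℝ] E} {P : E →L[ℝ] E} {k₀ l₀ : E ≃ₗᵢ[ℝ] E}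
    (hk : Tendsto (fun n => (k n : E →L[ℝ] E)) f (𝓝 k₀))
    (hl : Tendsto (fun n => (l n : E →L[ℝ] E)) f (𝓝 l₀))
    (ha : Tendsto (fun n => ‖a n‖⁻¹ • a n) f (𝓝 P)) :
    Tendsto (fun n => ‖(k n : E →L[ℝ] E) * a n * l n‖⁻¹ • ((k n : E →L[ℝ] E) * a n * l n)) f
      (𝓝 (k₀ * P * l₀)) := by
  have hnorm (n : ι) : ‖(k n : E →L[ℝ] E) * a n * l n‖ = ‖a n‖ := by
    rw [ContinuousLinearMap.opNorm_mul_linearIsometryEquiv,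
      ContinuousLinearMap.opNorm_linearIsometryEquiv_mul]
  simpa only [hnorm, mul_smul_comm, smul_mul_assoc] using (hk.mul ha).mul hl

theorem stmt_15_general {V : Type*} [NormedAddCommGroup V] [InnerProductSpace ℝ V]
    [FiniteDimensional ℝ V]
    (L : Submodule ℝ V) (hL : Module.finrank ℝ L = 1)
    (g a : ℕ → V →L[ℝ] V) (k l : ℕ → V ≃ₗᵢ[ℝ] V) (k0 l0 : V ≃ₗᵢ[ℝ] V)
    (hdecomp : ∀ n, g n =
      ((k n).toLinearIsometry.toContinuousLinearMap).comp
        ((a n).comp ((l n).toLinearIsometry.toContinuousLinearMap)))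
    (hk : Tendsto (fun n => (k n).toLinearIsometry.toContinuousLinearMap) atTop
      (nhds k0.toLinearIsometry.toContinuousLinearMap))
    (hl : Tendsto (fun n => (l n).toLinearIsometry.toContinuousLinearMap) atTop
      (nhds l0.toLinearIsometry.toContinuousLinearMap))
    (haproj : Tendsto (fun n => ‖a n‖⁻¹ • a n) atTop
      (nhds (L.subtypeL.comp (Submodule.orthogonalProjection L))))
    (T : V →L[ℝ] V)
    (hT : Tendsto (fun n => ‖g n‖⁻¹ • g n) atTop (nhds T)) :
    LinearMap.rank (T : V →ₗ[ℝ] V) = 1 ∧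
    LinearMap.range (T : V →ₗ[ℝ] V) = L.map k0.toLinearIsometry.toLinearMap ∧
    LinearMap.ker (T : V →ₗ[ℝ] V) = Lᗮ.comap l0.toLinearIsometry.toLinearMap := by
  have : Nontrivial V := Module.nontrivial_of_finrank_pos (hL ▸ Submodule.finrank_le L)
  have hg : g = fun n => (k n : V →L[ℝ] V) * a n * l n :=
    funext fun n => (hdecomp n).trans (mul_assoc ..).symm
  subst hg
  obtain rfl : T = k0 * L.starProjection * l0 :=
    tendsto_nhds_unique hT (hk.inv_norm_smul_linearIsometryEquiv_mul_mul hl haproj)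
  rw [LinearMap.rank, ContinuousLinearMap.range_linearIsometryEquiv_mul_starProjection_mul,
    ContinuousLinearMap.ker_linearIsometryEquiv_mul_starProjection_mul]
  exact ⟨(k0.toLinearEquiv.rank_map_eq L).trans (Module.rank_eq_one_iff_finrank_eq_one.2 hL),
    rfl, rfl⟩

/-- limits of normalized operators with singular value decomposition
gₙ = kₙ aₙ ℓₙ, where aₙ/‖aₙ‖ converges to the orthogonal projection onto a fixed
line L (top eigenspace of each aₙ), have rank one with image k(L) and kernel
ℓ⁻¹(L^⊥). -/
theorem stmt_15 {V : Type*} [NormedAddCommGroup V] [InnerProductSpace ℝ V]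
    [FiniteDimensional ℝ V]
    (L : Submodule ℝ V) (hL : Module.finrank ℝ L = 1)
    (g a : ℕ → V →L[ℝ] V) (k l : ℕ → V ≃ₗᵢ[ℝ] V) (k0 l0 : V ≃ₗᵢ[ℝ] V)
    (hdecomp : ∀ n, g n =
      ((k n).toLinearIsometry.toContinuousLinearMap).comp
        ((a n).comp ((l n).toLinearIsometry.toContinuousLinearMap)))
    (hsa : ∀ n, IsSelfAdjoint (a n))
    (hpos : ∀ n, ∀ v : V, 0 ≤ (inner ℝ ((a n) v) v : ℝ))
    (htop : ∀ n, ∀ v ∈ L, (a n) v = ‖a n‖ • v)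
    (hk : Tendsto (fun n => (k n).toLinearIsometry.toContinuousLinearMap) atTop
      (nhds k0.toLinearIsometry.toContinuousLinearMap))
    (hl : Tendsto (fun n => (l n).toLinearIsometry.toContinuousLinearMap) atTop
      (nhds l0.toLinearIsometry.toContinuousLinearMap))
    (haproj : Tendsto (fun n => ‖a n‖⁻¹ • a n) atTop
      (nhds (L.subtypeL.comp (Submodule.orthogonalProjection L))))
    (T : V →L[ℝ] V)
    (hT : Tendsto (fun n => ‖g n‖⁻¹ • g n) atTop (nhds T)) :
    LinearMap.rank (T : V →ₗ[ℝ] V) = 1 ∧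
    LinearMap.range (T : V →ₗ[ℝ] V) = L.map k0.toLinearIsometry.toLinearMap ∧
    LinearMap.ker (T : V →ₗ[ℝ] V) = Lᗮ.comap l0.toLinearIsometry.toLinearMap :=
  stmt_15_general L hL g a k l k0 l0 hdecomp hk hl haproj T hT
end
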